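/- arXiv:1312.7484 — 3 statements merged into one kernel-verified Lean document; each statement's English description precedes it below -/
import Mathlib

section
/- Let N ≥ 1, 1 < p < ∞. Let J : ℝ^N → ℝ be a nonnegative bounded measurable function supported in the closed unit ball B[0,1], and let ρ satisfy hypothesis (H2) with constant K > 0. Then for every u ∈ L^p(ℝ^N, ρ), the convolution J∗u(x) = ∫_{ℝ^N} J(x − y) u(y) dy is well defined and satisfies ‖J∗u‖_{L^p(ℝ^N, ρ)} ≤ K^{1/p} ‖J‖_{L¹(ℝ^N)} ‖u‖_{L^p(ℝ^N, ρ)}. -/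
open MeasureTheory
open scoped ENNReal

/-!
Write `j = |J|`, `w = |u|` and `C = ‖J‖₁`. Hölder's inequality for the measure `j(x - y) dy`,
of mass `C`, gives `|J∗u(x)|^p ≤ C^(p-1) ∫ j(x - y) w(y)^p dy`. Integrating against `ρ(x) dx` and
swapping the integrals, it remains to bound `∫ j(x - y) ρ(x) dx` by `K C ρ(y)`; this holds because
`j(x - y) ≠ 0` forces `|x - y| ≤ 1`, where (H2) gives `ρ(x) ≤ K ρ(y)`. The same pointwise bound,
with `j ≤ sup J`, shows that `∫ j(x - y) w(y)^p dy < ∞` for every `x`; by the Hölder bound the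
convolution integral then converges absolutely at every point.
-/

theorem rpow_lintegral_mul_le_lintegral_mul_rpow {α : Type*} [MeasurableSpace α] {μ : Measure α}
    {p : ℝ} (hp : 1 < p) {f g : α → ℝ≥0∞} (hf : AEMeasurable f μ) (hg : AEMeasurable g μ) :
    (∫⁻ a, f a * g a ∂μ) ^ p ≤ (∫⁻ a, f a ∂μ) ^ (p - 1) * ∫⁻ a, f a * g a ^ p ∂μ := by
  have hp0 : 0 < p := zero_lt_one.trans hp
  have hpq : p.HolderConjugate (p / (p - 1)) := .conjExponent hp
  set q := p / (p - 1)
  have hsplit : ∀ a, f a * g a = f a ^ (1 / q) * (f a ^ (1 / p) * g a) := fun a => by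
    rw [← mul_assoc, ← ENNReal.rpow_add_of_nonneg _ _ hpq.symm.one_div_nonneg hpq.one_div_nonneg,
      one_div, one_div, hpq.symm.inv_add_inv_eq_one, ENNReal.rpow_one]
  have hfq : ∀ a, (f a ^ (1 / q)) ^ q = f a := fun a => by
    rw [← ENNReal.rpow_mul, one_div_mul_cancel hpq.symm.ne_zero, ENNReal.rpow_one]
  have hfgp : ∀ a, (f a ^ (1 / p) * g a) ^ p = f a * g a ^ p := fun a => by
    rw [ENNReal.mul_rpow_of_nonneg _ _ hp0.le, ← ENNReal.rpow_mul, one_div_mul_cancel hp0.ne',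
      ENNReal.rpow_one]
  have hholder := ENNReal.lintegral_mul_le_Lp_mul_Lq μ hpq.symm (hf.pow_const (1 / q))
    ((hf.pow_const (1 / p)).mul hg)
  simp only [Pi.mul_apply, hfq, hfgp, ← hsplit] at hholder
  calc (∫⁻ a, f a * g a ∂μ) ^ p
      ≤ ((∫⁻ a, f a ∂μ) ^ (1 / q) * (∫⁻ a, f a * g a ^ p ∂μ) ^ (1 / p)) ^ p :=
        ENNReal.rpow_le_rpow hholder hp0.le
    _ = (∫⁻ a, f a ∂μ) ^ (p - 1) * ∫⁻ a, f a * g a ^ p ∂μ := by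
        rw [ENNReal.mul_rpow_of_nonneg _ _ hp0.le, ← ENNReal.rpow_mul, ← ENNReal.rpow_mul,
          one_div_mul_eq_div, hpq.div_conj_eq_sub_one, one_div_mul_cancel hp0.ne', ENNReal.rpow_one]

section WeightedConvolution

variable {G : Type*} [SeminormedAddCommGroup G] {K : ℝ≥0∞} {j ρ : G → ℝ≥0∞}

theorem mul_weight_le_of_support_subset_closedBall (hj : ∀ z, j z ≠ 0 → ‖z‖ ≤ 1)
    (hρ : ∀ y x, dist x y ≤ 1 → ρ x ≤ K * ρ y) (x y : G) :
    j (x - y) * ρ x ≤ K * (j (x - y) * ρ y) := by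
  rcases eq_or_ne (j (x - y)) 0 with h | h
  · simp [h]
  · calc j (x - y) * ρ x ≤ j (x - y) * (K * ρ y) := by
          gcongr
          exact hρ y x (by rw [dist_eq_norm]; exact hj _ h)
      _ = K * (j (x - y) * ρ y) := by ring

variable [MeasurableSpace G] {μ : Measure G} {w : G → ℝ≥0∞}

theorem lintegral_sub_mul_mul_weight_le (hj : ∀ z, j z ≠ 0 → ‖z‖ ≤ 1)
    (hρ : ∀ y x, dist x y ≤ 1 → ρ x ≤ K * ρ y) {M : ℝ≥0∞} (hjM : ∀ z, j z ≤ M)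
    (hw : Measurable w) (hρm : AEMeasurable ρ μ) (x : G) :
    (∫⁻ y, j (x - y) * w y ∂μ) * ρ x ≤ K * M * ∫⁻ y, w y * ρ y ∂μ := by
  calc (∫⁻ y, j (x - y) * w y ∂μ) * ρ x = ρ x * ∫⁻ y, j (x - y) * w y ∂μ := mul_comm _ _
    _ ≤ ∫⁻ y, ρ x * (j (x - y) * w y) ∂μ := lintegral_const_mul_le _ _
    _ ≤ ∫⁻ y, K * M * (w y * ρ y) ∂μ := lintegral_mono fun y => by
        calc ρ x * (j (x - y) * w y) = j (x - y) * ρ x * w y := by ring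
          _ ≤ K * (j (x - y) * ρ y) * w y := by
              gcongr ?_ * _; exact mul_weight_le_of_support_subset_closedBall hj hρ x y
          _ ≤ K * (M * ρ y) * w y := by gcongr; exact hjM _
          _ = K * M * (w y * ρ y) := by ring
    _ = K * M * ∫⁻ y, w y * ρ y ∂μ := lintegral_const_mul'' _ (hw.aemeasurable.mul hρm)

variable [MeasurableAdd₂ G] [MeasurableNeg G] [μ.IsAddLeftInvariant]

theorem lintegral_lintegral_sub_mul_mul_weight_le [SFinite μ] (hj : ∀ z, j z ≠ 0 → ‖z‖ ≤ 1)
    (hρ : ∀ y x, dist x y ≤ 1 → ρ x ≤ K * ρ y) (hjm : Measurable j) (hw : Measurable w)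
    (hρm : AEMeasurable ρ μ) :
    ∫⁻ x, (∫⁻ y, j (x - y) * w y ∂μ) * ρ x ∂μ ≤ K * (∫⁻ z, j z ∂μ) * ∫⁻ y, w y * ρ y ∂μ := by
  have hjρ : ∀ y, ∫⁻ x, j (x - y) * ρ x ∂μ ≤ K * (∫⁻ z, j z ∂μ) * ρ y := fun y => by
    calc ∫⁻ x, j (x - y) * ρ x ∂μ ≤ ∫⁻ x, K * ρ y * j (x - y) ∂μ := lintegral_mono fun x => by
          rw [mul_comm K, mul_assoc]
          exact (mul_weight_le_of_support_subset_closedBall hj hρ x y).trans_eq (by ring)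
      _ = K * (∫⁻ z, j z ∂μ) * ρ y := by
          rw [lintegral_const_mul _ (by fun_prop : Measurable fun x => j (x - y)),
            lintegral_sub_right_eq_self]
          ring
  calc ∫⁻ x, (∫⁻ y, j (x - y) * w y ∂μ) * ρ x ∂μ
      = ∫⁻ x, ∫⁻ y, j (x - y) * ρ x * w y ∂μ ∂μ := lintegral_congr fun x => by
        rw [← lintegral_mul_const _ (by fun_prop : Measurable fun y => j (x - y) * w y)]
        exact lintegral_congr fun y => by ring
    _ = ∫⁻ y, ∫⁻ x, j (x - y) * ρ x * w y ∂μ ∂μ := lintegral_lintegral_swap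
        (((hjm.comp measurable_sub).aemeasurable.mul hρm.comp_fst).mul
          (hw.comp measurable_snd).aemeasurable)
    _ = ∫⁻ y, (∫⁻ x, j (x - y) * ρ x ∂μ) * w y ∂μ := lintegral_congr fun y =>
        lintegral_mul_const'' _ (by fun_prop : AEMeasurable (fun x => j (x - y) * ρ x) μ)
    _ ≤ ∫⁻ y, K * (∫⁻ z, j z ∂μ) * (w y * ρ y) ∂μ := lintegral_mono fun y => by
        rw [mul_comm (w y), ← mul_assoc]
        gcongr
        exact hjρ y
    _ = K * (∫⁻ z, j z ∂μ) * ∫⁻ y, w y * ρ y ∂μ := lintegral_const_mul'' _ (hw.aemeasurable.mul hρm)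

variable [μ.IsNegInvariant] {p : ℝ}

theorem rpow_lintegral_sub_mul_le (hp : 1 < p) (hjm : Measurable j) (hw : Measurable w) (x : G) :
    (∫⁻ y, j (x - y) * w y ∂μ) ^ p
      ≤ (∫⁻ z, j z ∂μ) ^ (p - 1) * ∫⁻ y, j (x - y) * w y ^ p ∂μ := by
  simpa only [lintegral_sub_left_eq_self] using rpow_lintegral_mul_le_lintegral_mul_rpow hp
    (μ := μ) (f := fun y => j (x - y)) (by fun_prop) hw.aemeasurable

theorem lintegral_sub_mul_lt_top (hp : 1 < p) (hj : ∀ z, j z ≠ 0 → ‖z‖ ≤ 1)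
    (hρ : ∀ y x, dist x y ≤ 1 → ρ x ≤ K * ρ y) (hK : K ≠ ⊤) {M : ℝ≥0∞} (hjM : ∀ z, j z ≤ M)
    (hM : M ≠ ⊤) (hjm : Measurable j) (hj1 : ∫⁻ z, j z ∂μ ≠ ⊤) (hw : Measurable w)
    (hρm : AEMeasurable ρ μ) (hwρ : ∫⁻ y, w y ^ p * ρ y ∂μ ≠ ⊤) {x : G} (hρx : ρ x ≠ 0) :
    ∫⁻ y, j (x - y) * w y ∂μ < ⊤ := by
  have hp0 : 0 < p := zero_lt_one.trans hp
  have hjwp : ∫⁻ y, j (x - y) * w y ^ p ∂μ < ⊤ := by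
    refine ENNReal.lt_top_of_mul_ne_top_left (ne_top_of_le_ne_top ?_
      (lintegral_sub_mul_mul_weight_le hj hρ hjM (hw.pow_const p) hρm x)) hρx
    exact ENNReal.mul_ne_top (ENNReal.mul_ne_top hK hM) hwρ
  rw [← ENNReal.rpow_lt_top_iff_of_pos hp0]
  exact (rpow_lintegral_sub_mul_le hp hjm hw x).trans_lt (ENNReal.mul_lt_top
    (ENNReal.rpow_lt_top_of_nonneg (by linarith) hj1) hjwp)

theorem lintegral_rpow_lintegral_sub_mul_mul_weight_le [SFinite μ] (hp : 1 < p)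
    (hj : ∀ z, j z ≠ 0 → ‖z‖ ≤ 1) (hρ : ∀ y x, dist x y ≤ 1 → ρ x ≤ K * ρ y)
    (hjm : Measurable j) (hw : Measurable w) (hρm : AEMeasurable ρ μ) :
    (∫⁻ x, (∫⁻ y, j (x - y) * w y ∂μ) ^ p * ρ x ∂μ) ^ (1 / p)
      ≤ K ^ (1 / p) * (∫⁻ z, j z ∂μ) * (∫⁻ y, w y ^ p * ρ y ∂μ) ^ (1 / p) := by
  have hp0 : 0 < p := zero_lt_one.trans hp
  set C := ∫⁻ z, j z ∂μ
  have hCp : C ^ (p - 1) * C = C ^ p := by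
    conv_rhs => rw [show p = (p - 1) + 1 by ring]
    rw [ENNReal.rpow_add_of_nonneg _ _ (by linarith) zero_le_one, ENNReal.rpow_one]
  have hWm : AEMeasurable (fun x => (∫⁻ y, j (x - y) * w y ^ p ∂μ) * ρ x) μ :=
    (((hjm.comp measurable_sub).mul ((hw.pow_const p).comp measurable_snd)).lintegral_prod_right'
      (ν := μ)).aemeasurable.mul hρm
  have hpow : ∫⁻ x, (∫⁻ y, j (x - y) * w y ∂μ) ^ p * ρ x ∂μ
      ≤ K * C ^ p * ∫⁻ y, w y ^ p * ρ y ∂μ :=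
    calc ∫⁻ x, (∫⁻ y, j (x - y) * w y ∂μ) ^ p * ρ x ∂μ
        ≤ ∫⁻ x, C ^ (p - 1) * ((∫⁻ y, j (x - y) * w y ^ p ∂μ) * ρ x) ∂μ :=
          lintegral_mono fun x => by
            rw [← mul_assoc]
            gcongr
            exact rpow_lintegral_sub_mul_le hp hjm hw x
      _ = C ^ (p - 1) * ∫⁻ x, (∫⁻ y, j (x - y) * w y ^ p ∂μ) * ρ x ∂μ :=
          lintegral_const_mul'' _ hWm
      _ ≤ C ^ (p - 1) * (K * C * ∫⁻ y, w y ^ p * ρ y ∂μ) := by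
          gcongr
          exact lintegral_lintegral_sub_mul_mul_weight_le hj hρ hjm (hw.pow_const p) hρm
      _ = K * C ^ p * ∫⁻ y, w y ^ p * ρ y ∂μ := by rw [← hCp]; ring
  calc (∫⁻ x, (∫⁻ y, j (x - y) * w y ∂μ) ^ p * ρ x ∂μ) ^ (1 / p)
      ≤ (K * C ^ p * ∫⁻ y, w y ^ p * ρ y ∂μ) ^ (1 / p) :=
        ENNReal.rpow_le_rpow hpow (by positivity)
    _ = K ^ (1 / p) * C * (∫⁻ y, w y ^ p * ρ y ∂μ) ^ (1 / p) := by
        rw [ENNReal.mul_rpow_of_nonneg _ _ (by positivity),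
          ENNReal.mul_rpow_of_nonneg _ _ (by positivity), ← ENNReal.rpow_mul,
          mul_one_div_cancel hp0.ne', ENNReal.rpow_one]

end WeightedConvolution

theorem enorm_abs_rpow_mul {a b p : ℝ} (hb : 0 ≤ b) (hp : 0 ≤ p) :
    ‖|a| ^ p * b‖ₑ = ‖a‖ₑ ^ p * ENNReal.ofReal b := by
  rw [enorm_mul, Real.enorm_rpow_of_nonneg (abs_nonneg a) hp, Real.enorm_abs,
    Real.enorm_of_nonneg hb]

theorem integral_abs_rpow_mul_eq_toReal {α : Type*} [MeasurableSpace α] {μ : Measure α}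
    {f ρ : α → ℝ} {p : ℝ} (hp : 0 ≤ p) (hρ : ∀ x, 0 ≤ ρ x) (hf : AEMeasurable f μ)
    (hρm : AEMeasurable ρ μ) :
    ∫ x, |f x| ^ p * ρ x ∂μ = (∫⁻ x, ‖f x‖ₑ ^ p * ENNReal.ofReal (ρ x) ∂μ).toReal := by
  calc ∫ x, |f x| ^ p * ρ x ∂μ = ∫ x, ‖|f x| ^ p * ρ x‖ ∂μ :=
        integral_congr_ae (.of_forall fun x =>
          (Real.norm_of_nonneg (mul_nonneg (by positivity) (hρ x))).symm)
    _ = (∫⁻ x, ‖f x‖ₑ ^ p * ENNReal.ofReal (ρ x) ∂μ).toReal := by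
        rw [integral_norm_eq_lintegral_enorm
          (by fun_prop : AEMeasurable (fun x => |f x| ^ p * ρ x) μ).aestronglyMeasurable]
        simp only [enorm_abs_rpow_mul (hρ _) hp]

theorem integrable_of_bounded_of_support_subset_closedBall {E : Type*}
    [NormedAddCommGroup E] [MeasurableSpace E] [ProperSpace E] [OpensMeasurableSpace E]
    {μ : Measure E} [IsFiniteMeasureOnCompacts μ] {f : E → ℝ} (hf : AEStronglyMeasurable f μ)
    {M : ℝ} (hM : ∀ x, |f x| ≤ M) (hsupp : ∀ x, f x ≠ 0 → ‖x‖ ≤ 1) : Integrable f μ :=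
  (Measure.integrableOn_of_bounded measure_closedBall_lt_top.ne hf
    (.of_forall fun x => (Real.norm_eq_abs (f x)).trans_le (hM x)))
    |>.integrable_of_forall_notMem_eq_zero fun x hx => by_contra fun h => hx (mem_closedBall_zero_iff.mpr (hsupp x h))

section RealValued

variable {G : Type*} [SeminormedAddCommGroup G] [MeasurableSpace G] [MeasurableAdd₂ G]
  [MeasurableNeg G] {μ : Measure G} [μ.IsAddLeftInvariant] [μ.IsNegInvariant]
  {J ρ u : G → ℝ} {K p : ℝ}

theorem integrable_sub_mul_of_weighted_Lp (hp : 1 < p) (hJm : Measurable J) (hJ1 : Integrable J μ)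
    {M : ℝ} (hM : ∀ x, |J x| ≤ M) (hJsupp : ∀ x, J x ≠ 0 → ‖x‖ ≤ 1) (hρpos : ∀ x, 0 < ρ x)
    (hρm : AEMeasurable ρ μ) (hH2 : ∀ y x, dist x y ≤ 1 → ρ x ≤ K * ρ y) (hum : Measurable u)
    (huLp : Integrable (fun x => |u x| ^ p * ρ x) μ) (x : G) :
    Integrable (fun y => J (x - y) * u y) μ := by
  have hu : ∫⁻ y, ‖u y‖ₑ ^ p * ENNReal.ofReal (ρ y) ∂μ ≠ ⊤ := by
    simpa only [enorm_abs_rpow_mul (hρpos _).le (by linarith)] using huLp.hasFiniteIntegral.ne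
  refine ⟨(by fun_prop : Measurable fun y => J (x - y) * u y).aestronglyMeasurable, ?_⟩
  simpa only [HasFiniteIntegral, enorm_mul] using lintegral_sub_mul_lt_top hp
    (fun z hz => hJsupp z (enorm_ne_zero.mp hz))
    (fun y x h =>
      (ENNReal.ofReal_le_ofReal (hH2 y x h)).trans_eq (ENNReal.ofReal_mul' (hρpos y).le))
    ENNReal.ofReal_ne_top (fun z => (Real.enorm_eq_ofReal_abs (J z)).trans_le
      (ENNReal.ofReal_le_ofReal (hM z))) ENNReal.ofReal_ne_top hJm.enorm
    hJ1.hasFiniteIntegral.ne hum.enorm hρm.ennreal_ofReal hu (ENNReal.ofReal_pos.mpr (hρpos x)).ne'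

theorem weighted_Lp_norm_conv_le [SFinite μ] (hp : 1 < p) (hJm : Measurable J)
    (hJ1 : Integrable J μ) (hJsupp : ∀ x, J x ≠ 0 → ‖x‖ ≤ 1) (hρ0 : ∀ x, 0 ≤ ρ x)
    (hρm : AEMeasurable ρ μ) (hK : 0 ≤ K) (hH2 : ∀ y x, dist x y ≤ 1 → ρ x ≤ K * ρ y)
    (hum : Measurable u) (huLp : Integrable (fun x => |u x| ^ p * ρ x) μ) :
    (∫ x, |∫ y, J (x - y) * u y ∂μ| ^ p * ρ x ∂μ) ^ (1 / p)
      ≤ K ^ (1 / p) * (∫ x, |J x| ∂μ) * (∫ x, |u x| ^ p * ρ x ∂μ) ^ (1 / p) := by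
  have hp0 : 0 < p := zero_lt_one.trans hp
  have hu : ∫⁻ y, ‖u y‖ₑ ^ p * ENNReal.ofReal (ρ y) ∂μ ≠ ⊤ := by
    simpa only [enorm_abs_rpow_mul (hρ0 _) hp0.le] using huLp.hasFiniteIntegral.ne
  have hconvm : AEMeasurable (fun x => ∫ y, J (x - y) * u y ∂μ) μ :=
    (by fun_prop : Measurable fun z : G × G => J (z.1 - z.2) * u z.2).stronglyMeasurable
      |>.integral_prod_right'.aestronglyMeasurable.aemeasurable
  have hconv_le : ∀ x, ‖∫ y, J (x - y) * u y ∂μ‖ₑ ≤ ∫⁻ y, ‖J (x - y)‖ₑ * ‖u y‖ₑ ∂μ := fun x => by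
    simpa only [enorm_mul] using enorm_integral_le_lintegral_enorm fun y => J (x - y) * u y
  have hmain := lintegral_rpow_lintegral_sub_mul_mul_weight_le hp
    (fun z hz => hJsupp z (enorm_ne_zero.mp hz))
    (fun y x h => (ENNReal.ofReal_le_ofReal (hH2 y x h)).trans_eq (ENNReal.ofReal_mul hK))
    hJm.enorm hum.enorm hρm.ennreal_ofReal
  rw [integral_abs_rpow_mul_eq_toReal hp0.le hρ0 hconvm hρm,
    integral_abs_rpow_mul_eq_toReal hp0.le hρ0 hum.aemeasurable hρm,
    ENNReal.toReal_rpow, ENNReal.toReal_rpow, ← ENNReal.toReal_ofReal hK, ENNReal.toReal_rpow,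
    show ∫ x, |J x| ∂μ = (∫⁻ x, ‖J x‖ₑ ∂μ).toReal from
      integral_norm_eq_lintegral_enorm hJm.aestronglyMeasurable,
    ← ENNReal.toReal_mul, ← ENNReal.toReal_mul]
  refine ENNReal.toReal_mono ?_ (le_trans ?_ hmain)
  · exact ENNReal.mul_ne_top (ENNReal.mul_ne_top
      (ENNReal.rpow_ne_top_of_nonneg (by positivity) ENNReal.ofReal_ne_top)
      hJ1.hasFiniteIntegral.ne) (ENNReal.rpow_ne_top_of_nonneg (by positivity) hu)
  · gcongr with x
    exact hconv_le x

end RealValued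

theorem stmt_1_general (N : ℕ) (p : ℝ) (hp : 1 < p)
    (J ρ u : EuclideanSpace ℝ (Fin N) → ℝ)
    (hJmeas : Measurable J)
    (hJbdd : ∃ M : ℝ, ∀ x, |J x| ≤ M)
    (hJsupp : ∀ x, J x ≠ 0 → ‖x‖ ≤ 1)
    (hρpos : ∀ x, 0 < ρ x) (hρint : Integrable ρ)
    (K : ℝ) (hK : 0 < K)
    (hH2 : ∀ y x : EuclideanSpace ℝ (Fin N), dist x y ≤ 1 → ρ x ≤ K * ρ y)
    (humeas : Measurable u)
    (huLp : Integrable fun x => |u x| ^ p * ρ x) :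
    (∀ x : EuclideanSpace ℝ (Fin N), Integrable fun y => J (x - y) * u y) ∧
    (∫ x, |∫ y, J (x - y) * u y| ^ p * ρ x) ^ (1 / p)
      ≤ K ^ (1 / p) * (∫ x, |J x|) * (∫ x, |u x| ^ p * ρ x) ^ (1 / p) := by
  obtain ⟨M, hM⟩ := hJbdd
  have hJint : Integrable J :=
    integrable_of_bounded_of_support_subset_closedBall hJmeas.aestronglyMeasurable hM hJsupp
  exact ⟨integrable_sub_mul_of_weighted_Lp hp hJmeas hJint hM hJsupp hρpos hρint.aemeasurable hH2
      humeas huLp,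
    weighted_Lp_norm_conv_le hp hJmeas hJint hJsupp (fun x => (hρpos x).le)
      hρint.aemeasurable hK.le hH2 humeas huLp⟩

/-- For `J` nonnegative bounded measurable supported in the closed unit ball
and `ρ` satisfying (H2) with constant `K > 0`, the convolution `J∗u` is well defined for
every `u ∈ L^p(ℝ^N, ρ)` and `‖J∗u‖_{L^p(ρ)} ≤ K^{1/p} ‖J‖_{L¹} ‖u‖_{L^p(ρ)}`. -/
theorem stmt_1 (N : ℕ) (hN : 1 ≤ N) (p : ℝ) (hp : 1 < p)
    (J ρ u : EuclideanSpace ℝ (Fin N) → ℝ)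
    (hJmeas : Measurable J) (hJnn : ∀ x, 0 ≤ J x)
    (hJbdd : ∃ M : ℝ, ∀ x, |J x| ≤ M)
    (hJsupp : ∀ x, J x ≠ 0 → ‖x‖ ≤ 1)
    (hρpos : ∀ x, 0 < ρ x) (hρint : Integrable ρ)
    (hρeven : ∀ x, ρ (-x) = ρ x) (hρ1 : ∫ x, ρ x = 1)
    (K : ℝ) (hK : 0 < K)
    (hH2 : ∀ y x : EuclideanSpace ℝ (Fin N), dist x y ≤ 1 → ρ x ≤ K * ρ y)
    (humeas : Measurable u)
    (huLp : Integrable fun x => |u x| ^ p * ρ x) :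
    (∀ x : EuclideanSpace ℝ (Fin N), Integrable fun y => J (x - y) * u y) ∧
    (∫ x, |∫ y, J (x - y) * u y| ^ p * ρ x) ^ (1 / p)
      ≤ K ^ (1 / p) * (∫ x, |J x|) * (∫ x, |u x| ^ p * ρ x) ^ (1 / p) :=
  stmt_1_general N p hp J ρ u hJmeas hJbdd hJsupp hρpos hρint K hK hH2 humeas huLp
end

section
/- Let N ≥ 1, 1 < p < ∞, h > 0. Suppose f : ℝ → ℝ is globally Lipschitz with constant k₁ > 0 (H1), J : ℝ^N → ℝ is a nonnegative bounded measurable function supported in the closed unit ball, and ρ satisfies hypothesis (H2). Then the Cauchy problem for ∂u/∂t = −u + J∗(f∘u) + h is globally well posed in L^p(ℝ^N, ρ): for every u₀ ∈ L^p(ℝ^N, ρ) there exists a unique map u : ℝ → L^p(ℝ^N, ρ) such that u(0) = u₀ and u is differentiable with derivative u'(t) = −u(t) + J∗(f∘u(t)) + h for every t ∈ ℝ. -/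
/-!
The right-hand side `F u = -u + J∗(f∘u) + h` is globally Lipschitz on `L^p(ℝ^N, ρ)`, so the
theorem is the global Picard–Lindelöf theorem in that Banach space.

Since `J` is bounded by `M` and supported in the unit ball,
`|J∗(f∘u) - J∗(f∘v)|(x) ≤ M k₁ ∫_{B(x,1)} |u - v|`. Hölder's inequality on `B(x,1)` and Tonelli
then give `‖J∗(f∘u) - J∗(f∘v)‖_{L^p(ρ)} ≤ M k₁ |B₁| K^{1/p} ‖u - v‖_{L^p(ρ)}`: the condition
`ρ(x) ≤ K ρ(y)` for `|x - y| ≤ 1` is exactly what allows moving the weight from `x` to `y`.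
The same condition bounds `ρ` from below on every unit ball, so elements of `L^p(ρ)` are
integrable on unit balls and the convolution is defined.

For a globally Lipschitz field, local solutions exist on intervals of a uniform length; they glue
to a global solution, which is unique by Grönwall.
-/

open MeasureTheory Metric ENNReal

section
open Set NNReal Topology Function

section IntegralCurve

variable {E : Type*} [NormedAddCommGroup E] [NormedSpace ℝ E] {γ γ' : ℝ → E} {v : ℝ → E → E}
  {s s' : Set ℝ}

theorem IsIntegralCurveOn.congr_of_eqOn (h : IsIntegralCurveOn γ v s) (hγ : EqOn γ' γ s) :
    IsIntegralCurveOn γ' v s := fun t ht => by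
  rw [hγ ht]
  exact (h t ht).congr_of_mem hγ ht

theorem IsIntegralCurveOn.union (h : IsIntegralCurveOn γ v s) (h' : IsIntegralCurveOn γ v s')
    (hs : IsClosed s) (hs' : IsClosed s') : IsIntegralCurveOn γ v (s ∪ s') := by
  -- at a point outside a closed set every derivative within that set is valid
  have within {u : Set ℝ} (hu : IsClosed u) (hγu : IsIntegralCurveOn γ v u) (t : ℝ) :
      HasDerivWithinAt γ (v t (γ t)) u t := by
    by_cases ht : t ∈ u
    · exact hγu t ht
    · exact HasFDerivWithinAt.of_notMem_closure (by rwa [hu.closure_eq])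
  exact fun t _ => (within hs h t).union (within hs' h' t)

theorem IsIntegralCurveOn.piecewise_Iic {a b c : ℝ} (hab : a ≤ b) (hbc : b ≤ c)
    (h : IsIntegralCurveOn γ v (Icc a b)) (h' : IsIntegralCurveOn γ' v (Icc b c))
    (hb : γ b = γ' b) :
    IsIntegralCurveOn ((Iic b).piecewise γ γ') v (Icc a c) := by
  classical
  have hleft : EqOn ((Iic b).piecewise γ γ') γ (Icc a b) :=
    (piecewise_eqOn _ _ _).mono fun t ht => ht.2
  have hright : EqOn ((Iic b).piecewise γ γ') γ' (Icc b c) := by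
    intro t ht
    rcases ht.1.eq_or_lt with rfl | hlt
    · simpa using hb
    · exact piecewise_eq_of_notMem _ _ _ (not_le.mpr hlt)
  rw [← Icc_union_Icc_eq_Icc hab hbc]
  exact (h.congr_of_eqOn hleft).union (h'.congr_of_eqOn hright) isClosed_Icc isClosed_Icc

theorem IsIntegralCurveOn.eqOn_Ioo {L : ℝ≥0} {F : E → E} (hF : LipschitzWith L F) {a b t₀ : ℝ}
    (h : IsIntegralCurveOn γ (fun _ => F) (Ioo a b))
    (h' : IsIntegralCurveOn γ' (fun _ => F) (Ioo a b)) (ht₀ : t₀ ∈ Ioo a b)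
    (heq : γ t₀ = γ' t₀) : EqOn γ γ' (Ioo a b) :=
  ODE_solution_unique_of_mem_Ioo (s := fun _ => univ) (fun _ _ => hF.lipschitzOnWith) ht₀
    (fun t ht => ⟨(h t ht).hasDerivAt (Ioo_mem_nhds ht.1 ht.2), trivial⟩)
    (fun t ht => ⟨(h' t ht).hasDerivAt (Ioo_mem_nhds ht.1 ht.2), trivial⟩) heq

end IntegralCurve

section UniformTime

variable {E : Type*} [NormedAddCommGroup E] [NormedSpace ℝ E] {v : ℝ → E → E} {ε : ℝ}

theorem exists_isIntegralCurveOn_Icc_add_of_uniform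
    (hloc : ∀ (t₀ : ℝ) (x₀ : E), ∃ γ : ℝ → E, γ t₀ = x₀ ∧
      IsIntegralCurveOn γ v (Icc (t₀ - ε) (t₀ + ε)))
    (hε : 0 < ε) {T : ℝ} (hT : 0 < T) {x₀ : E}
    (h : ∃ γ : ℝ → E, γ 0 = x₀ ∧ IsIntegralCurveOn γ v (Icc (-T) T)) :
    ∃ γ : ℝ → E, γ 0 = x₀ ∧ IsIntegralCurveOn γ v (Icc (-(T + ε)) (T + ε)) := by
  classical
  obtain ⟨γ, hγ0, hγ⟩ := h
  obtain ⟨γr, hγr, hr⟩ := hloc T (γ T)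
  obtain ⟨γl, hγl, hl⟩ := hloc (-T) (γ (-T))
  have hγ' := hγ.piecewise_Iic (by linarith) (by linarith : T ≤ T + ε)
    (hr.mono (Icc_subset_Icc (by linarith) le_rfl)) hγr.symm
  have hγ'' := (hl.mono (Icc_subset_Icc (by linarith) (by linarith))).piecewise_Iic
    (by linarith : -(T + ε) ≤ -T) (by linarith) hγ'
    (by rw [hγl, piecewise_eq_of_mem _ _ _ (by simp; linarith)])
  refine ⟨_, ?_, hγ''⟩
  rw [piecewise_eq_of_notMem _ _ _ (by simp; linarith),
    piecewise_eq_of_mem _ _ _ (mem_Iic.mpr hT.le), hγ0]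

theorem exists_isIntegralCurveOn_Ioo_of_uniform
    (hloc : ∀ (t₀ : ℝ) (x₀ : E), ∃ γ : ℝ → E, γ t₀ = x₀ ∧
      IsIntegralCurveOn γ v (Icc (t₀ - ε) (t₀ + ε)))
    (hε : 0 < ε) (x₀ : E) (T : ℝ) :
    ∃ γ : ℝ → E, γ 0 = x₀ ∧ IsIntegralCurveOn γ v (Ioo (-T) T) := by
  have hnat (n : ℕ) :
      ∃ γ : ℝ → E, γ 0 = x₀ ∧ IsIntegralCurveOn γ v (Icc (-((n + 1) * ε)) ((n + 1) * ε)) := by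
    induction n with
    | zero => simpa [sub_eq_add_neg] using hloc 0 x₀
    | succ n ih =>
      simpa [add_mul, add_assoc] using
        exists_isIntegralCurveOn_Icc_add_of_uniform hloc hε (by positivity) ih
  obtain ⟨γ, hγ0, hγ⟩ := hnat ⌈T / ε⌉₊
  have hT : T ≤ (⌈T / ε⌉₊ + 1) * ε := by
    have := (div_le_iff₀ hε).mp (Nat.le_ceil (T / ε))
    nlinarith
  exact ⟨γ, hγ0, hγ.mono (Ioo_subset_Icc_self.trans (Icc_subset_Icc (by linarith) hT))⟩

end UniformTime

namespace LipschitzWith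

variable {E : Type*} [NormedAddCommGroup E] [NormedSpace ℝ E] [CompleteSpace E]
  {F : E → E} {L : ℝ≥0}

theorem exists_forall_isIntegralCurveOn_Icc (hF : LipschitzWith L F) :
    ∃ ε > 0, ∀ (t₀ : ℝ) (x₀ : E), ∃ γ : ℝ → E, γ t₀ = x₀ ∧
      IsIntegralCurveOn γ (fun _ => F) (Icc (t₀ - ε) (t₀ + ε)) := by
  -- On `closedBall x₀ ‖F x₀‖` we have `‖F‖ ≤ (L + 1) ‖F x₀‖`, so solutions stay there for time
  -- `(L + 1)⁻¹`, whatever `x₀` is.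
  refine ⟨((L : ℝ) + 1)⁻¹, by positivity, fun t₀ x₀ => ?_⟩
  set ε : ℝ := ((L : ℝ) + 1)⁻¹
  have hε : 0 < ε := by positivity
  set R := ‖F x₀‖₊
  have hpl : IsPicardLindelof (fun _ => F) (tmin := t₀ - ε) (tmax := t₀ + ε)
      ⟨t₀, by constructor <;> linarith⟩ x₀ R 0 ((L + 1) * R) L := by
    refine .of_time_independent (fun x hx => ?_) hF.lipschitzOnWith ?_
    · have hx : ‖x - x₀‖ ≤ R := mem_closedBall_iff_norm.mp hx
      calc ‖F x‖ ≤ ‖F x₀‖ + ‖F x - F x₀‖ := norm_le_insert' _ _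
        _ ≤ R + L * R := by
          gcongr
          · rfl
          · exact hF.norm_sub_le_of_le hx
        _ = ((L + 1) * R : ℝ≥0) := by push_cast; ring
    · have hmax : max (t₀ + ε - t₀) (t₀ - (t₀ - ε)) = ε := by simp
      have hLε : ((L : ℝ) + 1) * ε = 1 := mul_inv_cancel₀ (by positivity)
      simp only [hmax, NNReal.coe_zero, sub_zero]
      push_cast
      linear_combination (R : ℝ) * hLε
  exact hpl.exists_eq_forall_mem_Icc_hasDerivWithinAt₀

theorem existsUnique_hasDerivAt (hF : LipschitzWith L F) (x₀ : E) :
    ∃! γ : ℝ → E, γ 0 = x₀ ∧ ∀ t, HasDerivAt γ (F (γ t)) t := by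
  obtain ⟨ε, hε, hloc⟩ := hF.exists_forall_isIntegralCurveOn_Icc
  choose Γ hΓ0 hΓ using exists_isIntegralCurveOn_Ioo_of_uniform hloc hε x₀
  have hΓ_eq {T T' t : ℝ} (ht : t ∈ Ioo (-T) T) (ht' : t ∈ Ioo (-T') T') : Γ T t = Γ T' t := by
    have hsub (S : ℝ) (hS : min T T' ≤ S) : Ioo (-min T T') (min T T') ⊆ Ioo (-S) S :=
      Ioo_subset_Ioo (neg_le_neg hS) hS
    have hmin : 0 < min T T' := lt_min (by linarith [ht.1, ht.2]) (by linarith [ht'.1, ht'.2])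
    refine IsIntegralCurveOn.eqOn_Ioo hF ((hΓ T).mono (hsub T (min_le_left _ _)))
      ((hΓ T').mono (hsub T' (min_le_right _ _))) ⟨by linarith, hmin⟩ (by rw [hΓ0, hΓ0]) ?_
    rcases min_choice T T' with h | h <;> rw [h] <;> assumption
  have habs (t : ℝ) : t ∈ Ioo (-(|t| + 1)) (|t| + 1) := by
    rw [mem_Ioo, ← abs_lt]; exact lt_add_one _
  have hglobal (t : ℝ) : HasDerivAt (fun s => Γ (|s| + 1) s) (F (Γ (|t| + 1) t)) t := by
    have hnhds : Ioo (-(|t| + 1)) (|t| + 1) ∈ 𝓝 t := Ioo_mem_nhds (habs t).1 (habs t).2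
    exact ((hΓ _).isIntegralCurveAt hnhds).hasDerivAt.congr_of_eventuallyEq
      (Filter.mem_of_superset hnhds fun s hs => hΓ_eq (habs s) hs)
  refine ⟨fun t => Γ (|t| + 1) t, ⟨by simp [hΓ0], hglobal⟩, fun γ ⟨hγ0, hγ⟩ => ?_⟩
  exact ODE_solution_unique_univ (s := fun _ => univ) (t₀ := 0)
    (fun _ => hF.lipschitzOnWith) (fun t => ⟨hγ t, trivial⟩) (fun t => ⟨hglobal t, trivial⟩)
    (by simp [hγ0, hΓ0])

end LipschitzWith

theorem ENNReal.lintegral_rpow_le_measure_univ_rpow_mul {α : Type*} [MeasurableSpace α]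
    {m : Measure α} {ψ : α → ℝ≥0∞} (hψ : AEMeasurable ψ m) {q : ℝ} (hq : 1 ≤ q) :
    (∫⁻ x, ψ x ∂m) ^ q ≤ m univ ^ (q - 1) * ∫⁻ x, ψ x ^ q ∂m := by
  have hq0 : 0 < q := by linarith
  have holder := eLpNorm'_le_eLpNorm'_mul_rpow_measure_univ one_pos hq hψ.aestronglyMeasurable
  simp only [eLpNorm', enorm_eq_self, rpow_one, div_one] at holder
  calc (∫⁻ x, ψ x ∂m) ^ q
      ≤ ((∫⁻ x, ψ x ^ q ∂m) ^ (1 / q) * m univ ^ (1 - 1 / q)) ^ q := by gcongr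
    _ = m univ ^ (q - 1) * ∫⁻ x, ψ x ^ q ∂m := by
      rw [mul_rpow_of_nonneg _ _ hq0.le, ← rpow_mul, ← rpow_mul, one_div_mul_cancel hq0.ne',
        rpow_one, sub_mul, one_div_mul_cancel hq0.ne', one_mul, mul_comm]

theorem lintegral_closedBall_rpow_le {X : Type*} [PseudoMetricSpace X] [MeasurableSpace X]
    {ν : Measure X} {r : ℝ} {ψ : X → ℝ≥0∞} {c : ℝ≥0} {q : ℝ} (hq : 1 ≤ q)
    (hc : ∀ x, ν (closedBall x r) ≤ c) (hψ : AEMeasurable ψ ν) (x : X) :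
    (∫⁻ y in closedBall x r, ψ y ∂ν) ^ q ≤ c ^ (q - 1) * ∫⁻ y in closedBall x r, ψ y ^ q ∂ν :=
  calc (∫⁻ y in closedBall x r, ψ y ∂ν) ^ q
      ≤ ν (closedBall x r) ^ (q - 1) * ∫⁻ y in closedBall x r, ψ y ^ q ∂ν := by
        simpa using ENNReal.lintegral_rpow_le_measure_univ_rpow_mul hψ.restrict hq
          (m := ν.restrict (closedBall x r))
    _ ≤ c ^ (q - 1) * ∫⁻ y in closedBall x r, ψ y ^ q ∂ν := by
        gcongr ?_ * _
        exact rpow_le_rpow (hc x) (by linarith)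

section Ball

variable {X : Type*} [PseudoMetricSpace X] [MeasurableSpace X] [OpensMeasurableSpace X]
  {ν : Measure X} {r : ℝ}

theorem setLIntegral_closedBall_eq_lintegral_indicator (f : X → X → ℝ≥0∞) (x : X) :
    ∫⁻ y in closedBall x r, f x y ∂ν =
      ∫⁻ y, {z : X × X | dist z.2 z.1 ≤ r}.indicator (uncurry f) (x, y) ∂ν := by
  rw [← lintegral_indicator measurableSet_closedBall]
  rfl

theorem measurableSet_dist_le [SecondCountableTopology X] :
    MeasurableSet {z : X × X | dist z.2 z.1 ≤ r} :=
  measurableSet_le (measurable_snd.dist measurable_fst) measurable_const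

theorem Measurable.lintegral_closedBall [SecondCountableTopology X] [SFinite ν] {ψ : X → ℝ≥0∞}
    (hψ : Measurable ψ) :
    Measurable fun x => ∫⁻ y in closedBall x r, ψ y ∂ν := by
  simp_rw [setLIntegral_closedBall_eq_lintegral_indicator (fun _ y => ψ y)]
  exact ((hψ.comp measurable_snd).indicator measurableSet_dist_le).lintegral_prod_right'

theorem lintegral_lintegral_closedBall_swap [SecondCountableTopology X] [SFinite ν]
    {f : X → X → ℝ≥0∞} (hf : AEMeasurable (uncurry f) (ν.prod ν)) :
    ∫⁻ x, ∫⁻ y in closedBall x r, f x y ∂ν ∂ν = ∫⁻ y, ∫⁻ x in closedBall y r, f x y ∂ν ∂ν := by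
  simp_rw [setLIntegral_closedBall_eq_lintegral_indicator f,
    setLIntegral_closedBall_eq_lintegral_indicator (fun y x => f x y)]
  rw [lintegral_lintegral_swap (by exact hf.indicator measurableSet_dist_le)]
  congr! 3 with y x
  simp only [indicator, mem_ofPred_eq, dist_comm, uncurry]

end Ball

section Schur

variable {X : Type*} [PseudoMetricSpace X] [MeasurableSpace X] [OpensMeasurableSpace X]
  [SecondCountableTopology X] {ν : Measure X} [SFinite ν] {r : ℝ} {w ψ : X → ℝ≥0∞} {K c : ℝ≥0}

theorem lintegral_mul_lintegral_closedBall_rpow_le {q : ℝ} (hq : 1 ≤ q) (hw : AEMeasurable w ν)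
    (hwK : ∀ x y, dist x y ≤ r → w x ≤ K * w y) (hc : ∀ x, ν (closedBall x r) ≤ c)
    (hψ : Measurable ψ) :
    ∫⁻ x, w x * (∫⁻ y in closedBall x r, ψ y ∂ν) ^ q ∂ν ≤
      c ^ q * K * ∫⁻ y, w y * ψ y ^ q ∂ν := by
  have hψq : Measurable fun y => ψ y ^ q := hψ.pow_const q
  have hball (y : X) : ∫⁻ x in closedBall y r, w x ∂ν ≤ K * w y * c :=
    calc ∫⁻ x in closedBall y r, w x ∂ν ≤ ∫⁻ _ in closedBall y r, K * w y ∂ν :=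
          setLIntegral_mono measurable_const fun x hx => hwK x y hx
      _ = K * w y * ν (closedBall y r) := setLIntegral_const _ _
      _ ≤ K * w y * c := by gcongr; exact hc y
  calc ∫⁻ x, w x * (∫⁻ y in closedBall x r, ψ y ∂ν) ^ q ∂ν
      ≤ ∫⁻ x, w x * ((c : ℝ≥0∞) ^ (q - 1) * ∫⁻ y in closedBall x r, ψ y ^ q ∂ν) ∂ν := by
        gcongr with x
        exact lintegral_closedBall_rpow_le hq hc hψ.aemeasurable x
    _ = (c : ℝ≥0∞) ^ (q - 1) * ∫⁻ x, ∫⁻ y in closedBall x r, w x * ψ y ^ q ∂ν ∂ν := by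
        rw [← lintegral_const_mul' _ _ (rpow_ne_top_of_nonneg (by linarith) coe_ne_top)]
        refine lintegral_congr fun x => ?_
        rw [lintegral_const_mul _ hψq]
        ring
    _ = (c : ℝ≥0∞) ^ (q - 1) * ∫⁻ y, ψ y ^ q * ∫⁻ x in closedBall y r, w x ∂ν ∂ν := by
        rw [lintegral_lintegral_closedBall_swap]
        · refine congrArg _ (lintegral_congr fun y => ?_)
          rw [← lintegral_const_mul'' _ hw.restrict]
          simp_rw [mul_comm]
        · exact (hw.comp_quasiMeasurePreserving Measure.quasiMeasurePreserving_fst).mul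
            (hψq.comp measurable_snd).aemeasurable
    _ ≤ (c : ℝ≥0∞) ^ (q - 1) * ∫⁻ y, ψ y ^ q * (K * w y * c) ∂ν := by
        gcongr with y
        exact hball y
    _ = c ^ q * K * ∫⁻ y, w y * ψ y ^ q ∂ν := by
        have hcq : (c : ℝ≥0∞) ^ q = c ^ (q - 1) * c := by
          conv_lhs => rw [← sub_add_cancel q 1]
          rw [rpow_add_of_nonneg _ _ (by linarith) zero_le_one, ENNReal.rpow_one]
        rw [hcq, mul_assoc, mul_assoc, ← mul_assoc (c : ℝ≥0∞),
          ← lintegral_const_mul' ((c : ℝ≥0∞) * K) _ (mul_ne_top coe_ne_top coe_ne_top)]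
        congr 1
        refine lintegral_congr fun y => ?_
        ring

theorem eLpNorm_lintegral_closedBall_le {p : ℝ≥0∞} (hp : 1 ≤ p) (hp' : p ≠ ∞)
    (hw : AEMeasurable w ν) (hwK : ∀ x y, dist x y ≤ r → w x ≤ K * w y)
    (hc : ∀ x, ν (closedBall x r) ≤ c) (hψ : AEMeasurable ψ ν) :
    eLpNorm (fun x => ∫⁻ y in closedBall x r, ψ y ∂ν) p (ν.withDensity w) ≤
      c * K ^ (1 / p.toReal) * eLpNorm ψ p (ν.withDensity w) := by
  have hψ_ball (x : X) : ∫⁻ y in closedBall x r, ψ y ∂ν = ∫⁻ y in closedBall x r, hψ.mk ψ y ∂ν :=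
    lintegral_congr_ae (ae_restrict_of_ae hψ.ae_eq_mk)
  rw [funext hψ_ball, eLpNorm_congr_ae ((withDensity_absolutelyContinuous ν w).ae_le hψ.ae_eq_mk)]
  have hψm := hψ.measurable_mk
  set q := p.toReal
  have hq : 1 ≤ q := by simpa using ENNReal.toReal_mono hp' hp
  have hq0 : 0 < q := by linarith
  rw [eLpNorm_eq_lintegral_rpow_enorm_toReal (by positivity) hp',
    eLpNorm_eq_lintegral_rpow_enorm_toReal (by positivity) hp']
  simp only [enorm_eq_self]
  rw [lintegral_withDensity_eq_lintegral_mul₀ hw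
      (hψm.lintegral_closedBall.pow_const q).aemeasurable,
    lintegral_withDensity_eq_lintegral_mul₀ hw (hψm.pow_const q).aemeasurable]
  calc (∫⁻ x, w x * (∫⁻ y in closedBall x r, hψ.mk ψ y ∂ν) ^ q ∂ν) ^ (1 / q)
      ≤ (c ^ q * K * ∫⁻ y, w y * hψ.mk ψ y ^ q ∂ν) ^ (1 / q) := by
        gcongr
        exact lintegral_mul_lintegral_closedBall_rpow_le hq hw hwK hc hψm
    _ = c * K ^ (1 / q) * (∫⁻ y, w y * hψ.mk ψ y ^ q ∂ν) ^ (1 / q) := by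
        rw [mul_rpow_of_nonneg _ _ (by positivity), mul_rpow_of_nonneg _ _ (by positivity),
          ← ENNReal.rpow_mul, mul_one_div_cancel hq0.ne', ENNReal.rpow_one]

end Schur

theorem MeasureTheory.MemLp.integrableOn_of_le_mul_withDensity {α E : Type*} [MeasurableSpace α]
    [NormedAddCommGroup E] {ν : Measure α} {w : α → ℝ≥0∞} {s : Set α} {p : ℝ≥0∞} {u : α → E}
    {δ C : ℝ≥0∞} (hp : 1 ≤ p) (hu : MemLp u p (ν.withDensity w)) (hs : MeasurableSet s)
    (hνs : ν s ≠ ∞) (hδ : δ ≠ 0) (hδ' : δ ≠ ∞) (hC : C ≠ ∞) (hw : ∀ y ∈ s, δ ≤ C * w y) :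
    IntegrableOn u s ν := by
  have hle : ν.restrict s ≤ (C / δ) • ν.withDensity w := by
    refine Measure.le_iff.mpr fun A hA => ?_
    rw [Measure.restrict_apply hA, Measure.smul_apply, withDensity_apply _ hA, smul_eq_mul,
      ← setLIntegral_one, ← lintegral_const_mul' _ _ (div_ne_top hC hδ)]
    calc ∫⁻ _ in A ∩ s, 1 ∂ν ≤ ∫⁻ y in A ∩ s, C / δ * w y ∂ν :=
          setLIntegral_mono' (hA.inter hs) fun y hy => by
            rw [← ENNReal.div_self hδ hδ', mul_comm, ← mul_div_assoc, mul_comm]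
            exact ENNReal.div_le_div_right (hw y hy.2) δ
      _ ≤ ∫⁻ y in A, C / δ * w y ∂ν := lintegral_mono_set inter_subset_left
  have : IsFiniteMeasure (ν.restrict s) := isFiniteMeasure_restrict.mpr hνs
  exact (hu.of_measure_le_smul (div_ne_top hC hδ) hle).integrable hp

theorem mem_closedBall_of_apply_sub_ne_zero {X : Type*} [SeminormedAddCommGroup X] {J : X → ℝ}
    {r : ℝ} (hJr : support J ⊆ closedBall 0 r) {x y : X} (hy : J (x - y) ≠ 0) :
    y ∈ closedBall x r := by
  simpa [dist_eq_norm, norm_sub_rev] using hJr hy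

section Convolution

variable {X : Type*} [NormedAddCommGroup X] [MeasurableSpace X] [BorelSpace X] {ν : Measure X}
  {r : ℝ} {J : X → ℝ} {M k : ℝ≥0} {f : ℝ → ℝ}

theorem integrable_mul_comp_of_integrableOn_closedBall (hJ : Measurable J)
    (hJM : ∀ z, ‖J z‖ ≤ M) (hJr : support J ⊆ closedBall 0 r) (hf : LipschitzWith k f) {x : X}
    (hx : ν (closedBall x r) ≠ ∞) {u : X → ℝ} (hu : IntegrableOn u (closedBall x r) ν) :
    Integrable (fun y => J (x - y) * f (u y)) ν := by
  have hsupp : support (fun y => J (x - y) * f (u y)) ⊆ closedBall x r := fun y hy =>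
    mem_closedBall_of_apply_sub_ne_zero hJr (left_ne_zero_of_mul hy)
  rw [← integrableOn_iff_integrable_of_support_subset hsupp]
  have hbound : IntegrableOn (fun y => (M : ℝ) * (‖f 0‖ + k * ‖u y‖)) (closedBall x r) ν :=
    ((integrableOn_const hx).add (hu.norm.const_mul _)).const_mul _
  refine hbound.mono' ((hJ.comp (measurable_id.const_sub x)).aestronglyMeasurable.mul
    (hf.continuous.comp_aestronglyMeasurable hu.aestronglyMeasurable)) (ae_of_all _ fun y => ?_)
  rw [norm_mul]
  gcongr
  · exact hJM _
  · calc ‖f (u y)‖ ≤ ‖f 0‖ + ‖f (u y) - f 0‖ := norm_le_insert' _ _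
      _ ≤ ‖f 0‖ + k * ‖u y‖ := by simpa using hf.norm_sub_le (u y) 0

theorem enorm_integral_sub_integral_le (hJM : ∀ z, ‖J z‖ ≤ M) (hJr : support J ⊆ closedBall 0 r)
    (hf : LipschitzWith k f) {x : X} {u v : X → ℝ}
    (hu : Integrable (fun y => J (x - y) * f (u y)) ν)
    (hv : Integrable (fun y => J (x - y) * f (v y)) ν) :
    ‖(∫ y, J (x - y) * f (u y) ∂ν) - ∫ y, J (x - y) * f (v y) ∂ν‖ₑ ≤
      (M * k : ℝ≥0) * ∫⁻ y in closedBall x r, ‖u y - v y‖ₑ ∂ν := by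
  have hpt (y : X) : ‖J (x - y) * f (u y) - J (x - y) * f (v y)‖ₑ ≤
      (closedBall x r).indicator (fun y => (M * k : ℝ≥0) * ‖u y - v y‖ₑ) y := by
    by_cases hy : y ∈ closedBall x r
    · rw [indicator_of_mem hy, ← mul_sub, enorm_mul, ENNReal.coe_mul, mul_assoc]
      gcongr
      · simpa [← ofReal_norm] using ENNReal.ofReal_le_ofReal (hJM (x - y))
      · simpa [edist_eq_enorm_sub] using hf.edist_le_mul (u y) (v y)
    · have : J (x - y) = 0 := by_contra fun h => hy (mem_closedBall_of_apply_sub_ne_zero hJr h)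
      simp [this]
  calc ‖(∫ y, J (x - y) * f (u y) ∂ν) - ∫ y, J (x - y) * f (v y) ∂ν‖ₑ
      = ‖∫ y, J (x - y) * f (u y) - J (x - y) * f (v y) ∂ν‖ₑ := by rw [integral_sub hu hv]
    _ ≤ ∫⁻ y, ‖J (x - y) * f (u y) - J (x - y) * f (v y)‖ₑ ∂ν :=
        enorm_integral_le_lintegral_enorm _
    _ ≤ ∫⁻ y, (closedBall x r).indicator (fun y => (M * k : ℝ≥0) * ‖u y - v y‖ₑ) y ∂ν :=
        lintegral_mono hpt
    _ = (M * k : ℝ≥0) * ∫⁻ y in closedBall x r, ‖u y - v y‖ₑ ∂ν := by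
        rw [lintegral_indicator measurableSet_closedBall, lintegral_const_mul' _ _ coe_ne_top]

end Convolution

section Lipschitz

variable {X : Type*} [NormedAddCommGroup X] [MeasurableSpace X] [BorelSpace X]
  [SecondCountableTopology X] {ν : Measure X} [SFinite ν] {r : ℝ} {J : X → ℝ} {M k : ℝ≥0}
  {f : ℝ → ℝ} {w : X → ℝ≥0∞} {K c : ℝ≥0} {p : ℝ≥0∞} [Fact (1 ≤ p)]

local notation "μ" => ν.withDensity w

theorem eLpNorm_integral_sub_integral_le (hp : p ≠ ∞) (hw : AEMeasurable w ν)
    (hwK : ∀ x y, dist x y ≤ r → w x ≤ K * w y) (hc : ∀ x, ν (closedBall x r) ≤ c)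
    (hJM : ∀ z, ‖J z‖ ≤ M) (hJr : support J ⊆ closedBall 0 r) (hf : LipschitzWith k f)
    {u v : X → ℝ} (huv : AEStronglyMeasurable (u - v) ν)
    (hu : ∀ x, Integrable (fun y => J (x - y) * f (u y)) ν)
    (hv : ∀ x, Integrable (fun y => J (x - y) * f (v y)) ν) :
    eLpNorm (fun x => (∫ y, J (x - y) * f (u y) ∂ν) - ∫ y, J (x - y) * f (v y) ∂ν) p μ ≤
      (M * k * (c * K ^ (1 / p.toReal)) : ℝ≥0) * eLpNorm (u - v) p μ :=
  calc eLpNorm (fun x => (∫ y, J (x - y) * f (u y) ∂ν) - ∫ y, J (x - y) * f (v y) ∂ν) p μ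
      ≤ (M * k) • eLpNorm (fun x => ∫⁻ y in closedBall x r, ‖u y - v y‖ₑ ∂ν) p μ :=
        eLpNorm_le_nnreal_smul_eLpNorm_of_ae_le_mul' (ae_of_all _ fun x => by
          simpa using enorm_integral_sub_integral_le hJM hJr hf (hu x) (hv x)) p
    _ ≤ (M * k) • (c * K ^ (1 / p.toReal) * eLpNorm (fun y => ‖u y - v y‖ₑ) p μ) := by
        gcongr
        exact eLpNorm_lintegral_closedBall_le Fact.out hp hw hwK hc huv.enorm
    _ = (M * k * (c * K ^ (1 / p.toReal)) : ℝ≥0) * eLpNorm (u - v) p μ := by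
        rw [eLpNorm_enorm, ENNReal.smul_def, smul_eq_mul]
        push_cast [coe_rpow_of_nonneg _ (one_div_nonneg.mpr toReal_nonneg)]
        exact (mul_assoc _ _ _).symm

theorem lipschitzWith_of_ae_eq_neg_add_integral_add (hp : p ≠ ∞) (hw : AEMeasurable w ν)
    (hw0 : ∀ x, w x ≠ 0) (hw_top : ∀ x, w x ≠ ∞) (hwK : ∀ x y, dist x y ≤ r → w x ≤ K * w y)
    (hc : ∀ x, ν (closedBall x r) ≤ c) (hJ : Measurable J) (hJM : ∀ z, ‖J z‖ ≤ M)
    (hJr : support J ⊆ closedBall 0 r) (hf : LipschitzWith k f) (h : ℝ)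
    {F : Lp ℝ p μ → Lp ℝ p μ}
    (hF : ∀ v, F v =ᵐ[μ] fun x => -v x + (∫ y, J (x - y) * f (v y) ∂ν) + h) :
    LipschitzWith (1 + M * k * (c * K ^ (1 / p.toReal))) F := by
  have hνμ : ν ≪ μ := withDensity_absolutelyContinuous' hw (ae_of_all _ hw0)
  have hint (v : Lp ℝ p μ) (x : X) : Integrable (fun y => J (x - y) * f (v y)) ν := by
    have hball : ν (closedBall x r) ≠ ∞ := ((hc x).trans_lt coe_lt_top).ne
    refine integrable_mul_comp_of_integrableOn_closedBall hJ hJM hJr hf hball ?_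
    exact (Lp.memLp v).integrableOn_of_le_mul_withDensity Fact.out measurableSet_closedBall hball
      (hw0 x) (hw_top x) coe_ne_top fun y hy => hwK x y (by rwa [dist_comm])
  intro v u
  set G := fun x => (∫ y, J (x - y) * f (v y) ∂ν) - ∫ y, J (x - y) * f (u y) ∂ν
  have hFG : ⇑(F v) - ⇑(F u) =ᵐ[μ] (⇑u - ⇑v) + G := by
    filter_upwards [hF v, hF u] with x hv hu
    simp only [Pi.sub_apply, Pi.add_apply, hv, hu, G]
    ring
  have hG_meas : AEStronglyMeasurable G μ :=
    (((Lp.aestronglyMeasurable (F v)).sub (Lp.aestronglyMeasurable (F u))).sub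
      ((Lp.aestronglyMeasurable u).sub (Lp.aestronglyMeasurable v))).congr
      (by filter_upwards [hFG] with x hx; simp [hx])
  have hG : eLpNorm G p μ ≤ (M * k * (c * K ^ (1 / p.toReal)) : ℝ≥0) * edist v u := by
    rw [Lp.edist_def]
    exact eLpNorm_integral_sub_integral_le hp hw hwK hc hJM hJr hf
      (((Lp.aestronglyMeasurable v).sub (Lp.aestronglyMeasurable u)).mono_ac hνμ) (hint v) (hint u)
  calc edist (F v) (F u) = eLpNorm (⇑(F v) - ⇑(F u)) p μ := Lp.edist_def _ _
    _ = eLpNorm (⇑u - ⇑v + G) p μ := eLpNorm_congr_ae hFG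
    _ ≤ eLpNorm (⇑u - ⇑v) p μ + eLpNorm G p μ :=
        eLpNorm_add_le ((Lp.aestronglyMeasurable u).sub (Lp.aestronglyMeasurable v)) hG_meas
          Fact.out
    _ ≤ edist v u + (M * k * (c * K ^ (1 / p.toReal)) : ℝ≥0) * edist v u := by
        rw [eLpNorm_sub_comm, ← Lp.edist_def]
        gcongr
    _ = ((1 + M * k * (c * K ^ (1 / p.toReal)) : ℝ≥0) : ℝ≥0∞) * edist v u := by
        push_cast
        ring

end Lipschitz

end

theorem stmt_4_general (N : ℕ) (p : ℝ≥0∞) (hp2 : p ≠ ∞)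
    [Fact (1 ≤ p)]
    (h : ℝ)
    (f : ℝ → ℝ) (k₁ : ℝ)
    (hf : ∀ x y : ℝ, |f x - f y| ≤ k₁ * |x - y|)
    (J : EuclideanSpace ℝ (Fin N) → ℝ)
    (hJmeas : Measurable J)
    (hJbdd : ∃ M : ℝ, ∀ x, |J x| ≤ M)
    (hJsupp : ∀ x, J x ≠ 0 → ‖x‖ ≤ 1)
    (ρ : EuclideanSpace ℝ (Fin N) → ℝ)
    (hρpos : ∀ x, 0 < ρ x) (hρint : Integrable ρ)
    (K : ℝ)
    (hH2 : ∀ y x : EuclideanSpace ℝ (Fin N), dist x y ≤ 1 → ρ x ≤ K * ρ y)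
    (μ : Measure (EuclideanSpace ℝ (Fin N)))
    (hμ : μ = volume.withDensity fun x => ENNReal.ofReal (ρ x))
    (F : Lp ℝ p μ → Lp ℝ p μ)
    (hF : ∀ v : Lp ℝ p μ,
      ⇑(F v) =ᵐ[μ] fun x => -(v : EuclideanSpace ℝ (Fin N) → ℝ) x
        + (∫ y, J (x - y) * f ((v : EuclideanSpace ℝ (Fin N) → ℝ) y)) + h) :
    ∀ u₀ : Lp ℝ p μ, ∃! u : ℝ → Lp ℝ p μ,
      u 0 = u₀ ∧ ∀ t : ℝ, HasDerivAt u (F (u t)) t := by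
  intro u₀
  subst hμ
  obtain ⟨M, hM⟩ := hJbdd
  have hc (x : EuclideanSpace ℝ (Fin N)) : volume (closedBall x 1) ≤
      (volume (closedBall (0 : EuclideanSpace ℝ (Fin N)) 1)).toNNReal := by
    rw [coe_toNNReal measure_closedBall_lt_top.ne, Measure.addHaar_closedBall_center]
  have hf' : LipschitzWith k₁.toNNReal f := LipschitzWith.of_dist_le_mul fun a b => by
    simpa only [Real.dist_eq] using (hf a b).trans
      (mul_le_mul_of_nonneg_right (Real.le_coe_toNNReal k₁) (abs_nonneg _))
  have hL := lipschitzWith_of_ae_eq_neg_add_integral_add (M := M.toNNReal) (K := K.toNNReal) hp2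
    hρint.aemeasurable.ennreal_ofReal (fun x => (ofReal_pos.mpr (hρpos x)).ne')
    (fun _ => ofReal_ne_top)
    (fun x y hxy => (ofReal_le_ofReal (hH2 y x hxy)).trans_eq (ofReal_mul' (hρpos y).le)) hc
    hJmeas (fun z => (hM z).trans (Real.le_coe_toNNReal M))
    (fun z hz => mem_closedBall_zero_iff.mpr (hJsupp z hz)) hf' h hF
  exact hL.existsUnique_hasDerivAt u₀

/-- Under (H1) and (H2), the Cauchy problem for
`∂u/∂t = −u + J∗(f∘u) + h` is globally well posed in `L^p(ℝ^N, ρ)`: for any realization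
`F : L^p → L^p` of the right-hand side `u ↦ −u + J∗(f∘u) + h` and every initial datum
`u₀`, there is a unique globally defined solution `u : ℝ → L^p(ℝ^N, ρ)` with `u(0) = u₀`
and `u'(t) = F(u(t))` for every `t`. -/
theorem stmt_4 (N : ℕ) (hN : 1 ≤ N) (p : ℝ≥0∞) (hp1 : 1 < p) (hp2 : p ≠ ∞)
    [Fact (1 ≤ p)]
    (h : ℝ) (hh : 0 < h)
    (f : ℝ → ℝ) (k₁ : ℝ) (hk₁ : 0 < k₁)
    (hf : ∀ x y : ℝ, |f x - f y| ≤ k₁ * |x - y|)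
    (J : EuclideanSpace ℝ (Fin N) → ℝ)
    (hJmeas : Measurable J) (hJnn : ∀ x, 0 ≤ J x)
    (hJbdd : ∃ M : ℝ, ∀ x, |J x| ≤ M)
    (hJsupp : ∀ x, J x ≠ 0 → ‖x‖ ≤ 1)
    (ρ : EuclideanSpace ℝ (Fin N) → ℝ)
    (hρpos : ∀ x, 0 < ρ x) (hρint : Integrable ρ)
    (hρeven : ∀ x, ρ (-x) = ρ x) (hρ1 : ∫ x, ρ x = 1)
    (K : ℝ) (hK : 0 < K)
    (hH2 : ∀ y x : EuclideanSpace ℝ (Fin N), dist x y ≤ 1 → ρ x ≤ K * ρ y)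
    (μ : Measure (EuclideanSpace ℝ (Fin N)))
    (hμ : μ = volume.withDensity fun x => ENNReal.ofReal (ρ x))
    (F : Lp ℝ p μ → Lp ℝ p μ)
    (hF : ∀ v : Lp ℝ p μ,
      ⇑(F v) =ᵐ[μ] fun x => -(v : EuclideanSpace ℝ (Fin N) → ℝ) x
        + (∫ y, J (x - y) * f ((v : EuclideanSpace ℝ (Fin N) → ℝ) y)) + h) :
    ∀ u₀ : Lp ℝ p μ, ∃! u : ℝ → Lp ℝ p μ,
      u 0 = u₀ ∧ ∀ t : ℝ, HasDerivAt u (F (u t)) t :=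
  stmt_4_general N p hp2 h f k₁ hf J hJmeas hJbdd hJsupp ρ hρpos hρint K hH2 μ hμ F hF
end

section
/- Let N ≥ 1, 1 < p < ∞, h > 0. Assume (H1), (H2) with constant K, (H3) with bound a, and (H4) with constant S, and set R = a K^{1/p} ‖J‖_{L¹} + h. Fix ε > 0. Then for every η > 0 there exists t_η > 0 such that the set { u(t_η) : u : [0,∞) → L^p(ℝ^N, ρ) satisfies the variation of constants formula u(t) = e^{−t} u(0) + ∫₀^t e^{s−t} [J∗(f∘u(s)) + h] ds for all t ≥ 0, and ‖u(0)‖_{L^p(ℝ^N,ρ)} ≤ R + ε } admits a finite covering by balls of L^p(ℝ^N, ρ) of radius smaller than η. -/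
/-!
Every forcing term `J ∗ (f ∘ u(s)) + h` is bounded by `a ‖J‖₁ + |h|` and Lipschitz with a
constant depending only on `a` and `J`. For a finite measure, such functions form a totally
bounded subset of `Lᵖ`: tightness makes the mass outside a compact set negligible, and on the
compact set a Lipschitz function is pinned down, up to a small error, by its rounded values on a
finite net. The integral term of the variation of constants formula is an average of forcing
terms against the sub-probability measure `e^{s-t} ds` on `(0, t]`, so it lies in the closed
convex hull of these functions and `0`, which is still totally bounded. The remaining term
`e^{-t} u(0)` has norm at most `e^{-t} (R + ε)`, which is small for large `t`.
-/

open MeasureTheory Metric ENNReal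
open Set Filter Topology
open scoped NNReal

section LipschitzNet

variable {α : Type*} [PseudoMetricSpace α]

theorem IsCompact.exists_finite_abs_sub_lt_of_lipschitzWith {K : Set α} (hK : IsCompact K)
    (L : ℝ≥0) {c : ℝ} (hc : 0 < c) :
    ∃ t : Set α, t.Finite ∧ ∀ φ ψ : α → ℝ, LipschitzWith L φ → LipschitzWith L ψ →
      (∀ y ∈ t, |φ y - ψ y| < c) → ∀ x ∈ K, |φ x - ψ x| < 2 * c := by
  have hr : 0 < c / (2 * (L + 1)) := by positivity
  obtain ⟨t, -, ht, hKt⟩ := finite_cover_balls_of_compact hK hr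
  refine ⟨t, ht, fun φ ψ hφ hψ hnet x hx => ?_⟩
  obtain ⟨y, hy, hxy⟩ := mem_iUnion₂.1 (hKt hx)
  have hvar : ∀ χ : α → ℝ, LipschitzWith L χ → |χ x - χ y| ≤ c / 2 := fun χ hχ => by
    calc |χ x - χ y| ≤ L * dist x y := by simpa [Real.dist_eq] using hχ.dist_le_mul x y
      _ ≤ (L + 1) * (c / (2 * (L + 1))) := by
          gcongr
          · linarith
          · exact (mem_ball.1 hxy).le
      _ = c / 2 := by field_simp
  calc |φ x - ψ x| = |(φ x - φ y) + (φ y - ψ y) + (ψ y - ψ x)| := by ring_nf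
    _ ≤ |φ x - φ y| + |φ y - ψ y| + |ψ y - ψ x| := abs_add_three _ _ _
    _ < 2 * c := by linarith [hnet y hy, hvar φ hφ, hvar ψ hψ, abs_sub_comm (ψ y) (ψ x)]

end LipschitzNet

def lipschitzBoundedLp {α : Type*} [PseudoMetricSpace α] [MeasurableSpace α] (p : ℝ≥0∞)
    (μ : Measure α) (L : ℝ≥0) (M : ℝ) : Set (Lp ℝ p μ) :=
  {w | ∃ φ : α → ℝ, LipschitzWith L φ ∧ (∀ x, |φ x| ≤ M) ∧ w =ᵐ[μ] φ}

section LipschitzCompactness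

variable {α : Type*} [MetricSpace α] [MeasurableSpace α] [BorelSpace α]
  {p : ℝ≥0∞} (μ : Measure α)

theorem exists_isCompact_eLpNorm_lt [CompleteSpace α] [SecondCountableTopology α]
    [IsFiniteMeasure μ] [Fact (1 ≤ p)] (hp : p ≠ ∞) (m : ℝ) {ε : ℝ≥0∞} (hε : 0 < ε) :
    ∃ K : Set α, IsCompact K ∧ ∃ c > 0, ∀ F : α → ℝ,
      (∀ x ∈ K, |F x| ≤ c) → (∀ x, |F x| ≤ m) → eLpNorm F p μ < ε := by
  have hp0 : p ≠ 0 := (zero_lt_one.trans_le Fact.out).ne'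
  have hexp : 0 < 1 / p.toReal := one_div_pos.2 (ENNReal.toReal_pos hp0 hp)
  have htail : Tendsto (fun A => ‖m‖ₑ * μ A ^ (1 / p.toReal)) (cocompact α).smallSets (𝓝 0) := by
    have htight : Tendsto μ (cocompact α).smallSets (𝓝 0) := by
      simpa [IsTightMeasureSet] using isTightMeasureSet_singleton (μ := μ)
    have := ENNReal.Tendsto.const_mul
      ((ENNReal.continuous_rpow_const (y := 1 / p.toReal)).tendsto 0 |>.comp htight)
      (Or.inr (enorm_ne_top : ‖m‖ₑ ≠ ∞))
    rwa [ENNReal.zero_rpow_of_pos hexp, mul_zero] at this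
  have hconst : Tendsto (fun c : ℝ => μ univ ^ p.toReal⁻¹ * ENNReal.ofReal c) (𝓝[>] 0) (𝓝 0) := by
    simpa using ENNReal.Tendsto.const_mul
      ((ENNReal.continuous_ofReal.tendsto 0).mono_left nhdsWithin_le_nhds)
      (Or.inr (ENNReal.rpow_ne_top_of_nonneg (by positivity) (measure_ne_top μ univ)))
  obtain ⟨S, hS, hSsmall⟩ :=
    eventually_smallSets.1 (htail.eventually (gt_mem_nhds (ENNReal.half_pos hε.ne')))
  obtain ⟨K, hK, hKS⟩ := mem_cocompact.1 hS
  obtain ⟨c, hcsmall, hc⟩ :=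
    ((hconst.eventually (gt_mem_nhds (ENNReal.half_pos hε.ne'))).and self_mem_nhdsWithin).exists
  refine ⟨K, hK, c, hc, fun F hFK hF => ?_⟩
  have hKc : MeasurableSet Kᶜ := hK.measurableSet.compl
  calc eLpNorm F p μ ≤ eLpNorm (fun x => c + Kᶜ.indicator (fun _ => m) x) p μ := by
        refine eLpNorm_mono_real fun x => ?_
        by_cases hx : x ∈ K
        · simpa [hx] using hFK x hx
        · simpa [hx] using (hF x).trans (le_add_of_nonneg_left hc.le)
    _ ≤ eLpNorm (fun _ => c) p μ + eLpNorm (Kᶜ.indicator fun _ => m) p μ :=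
        eLpNorm_add_le aestronglyMeasurable_const
          (aestronglyMeasurable_const.indicator hKc) Fact.out
    _ ≤ μ univ ^ p.toReal⁻¹ * ENNReal.ofReal c + ‖m‖ₑ * μ Kᶜ ^ (1 / p.toReal) := by
        rw [eLpNorm_indicator_const hKc hp0 hp]
        gcongr
        exact eLpNorm_le_of_ae_bound (ae_of_all _ fun _ => (Real.norm_of_nonneg hc.le).le)
    _ < ε / 2 + ε / 2 := ENNReal.add_lt_add hcsmall (hSsmall _ hKS)
    _ = ε := ENNReal.add_halves ε

theorem totallyBounded_lipschitzBoundedLp [CompleteSpace α] [SecondCountableTopology α]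
    [IsFiniteMeasure μ] [Fact (1 ≤ p)] (hp : p ≠ ∞) (L : ℝ≥0) (M : ℝ) :
    TotallyBounded (lipschitzBoundedLp p μ L M) := by
  refine Metric.totallyBounded_of_finite_discretization fun ε hε => ?_
  obtain ⟨K, hK, c, hc, hsmall⟩ := exists_isCompact_eLpNorm_lt μ hp (2 * M) (ofReal_pos.2 hε)
  obtain ⟨t, ht, hnet⟩ := hK.exists_finite_abs_sub_lt_of_lipschitzWith L (half_pos hc)
  have : Finite t := ht.to_subtype
  choose φ hφL hφM hφw using fun w : lipschitzBoundedLp p μ L M => w.2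
  let D (w : lipschitzBoundedLp p μ L M) : t → ℤ := fun y => ⌊φ w y / (c / 2)⌋
  have hD : (range D).Finite := by
    refine (Set.Finite.pi fun _ => finite_Icc ⌊-M / (c / 2)⌋ ⌊M / (c / 2)⌋).subset ?_
    rintro _ ⟨w, rfl⟩
    refine mem_univ_pi.2 fun y => ⟨Int.floor_mono ?_, Int.floor_mono ?_⟩ <;> gcongr
    exacts [(abs_le.1 (hφM w y)).1, (abs_le.1 (hφM w y)).2]
  refine ⟨range D, hD.fintype, fun w => ⟨D w, mem_range_self w⟩, fun w w' hww' => ?_⟩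
  have hgrid : ∀ y ∈ t, |φ w y - φ w' y| < c / 2 := fun y hy => by
    have := Int.abs_sub_lt_one_of_floor_eq_floor (congrFun (Subtype.ext_iff.1 hww') ⟨y, hy⟩)
    rwa [← sub_div, abs_div, abs_of_pos (half_pos hc), div_lt_one (half_pos hc)] at this
  rw [Lp.dist_def, eLpNorm_congr_ae ((hφw w).sub (hφw w'))]
  refine ENNReal.toReal_lt_of_lt_ofReal (hsmall _ (fun x hx => ?_) fun x => ?_)
  · show |φ w x - φ w' x| ≤ c
    linarith [hnet _ _ (hφL w) (hφL w') hgrid x hx]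
  · show |φ w x - φ w' x| ≤ 2 * M
    linarith [abs_sub (φ w x) (φ w' x), hφM w x, hφM w' x]

end LipschitzCompactness

section KernelIntegral

variable {E : Type*} [NormedAddCommGroup E] [NormedSpace ℝ E] [FiniteDimensional ℝ E]
  [MeasurableSpace E] [BorelSpace E] (μ : Measure E) [μ.IsAddHaarMeasure]
  {J : E → ℝ} {v : E → ℝ} {a : ℝ}

theorem abs_integral_mul_le (hJ : Integrable J μ) (hva : ∀ y, |v y| ≤ a) (x : E) :
    |∫ y, J (x - y) * v y ∂μ| ≤ a * ∫ z, |J z| ∂μ := by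
  rw [← integral_sub_left_eq_self (fun z => |J z|) μ x, ← integral_const_mul, ← Real.norm_eq_abs]
  refine norm_integral_le_of_norm_le ((hJ.comp_sub_left x).abs.const_mul a)
    (ae_of_all _ fun y => ?_)
  rw [norm_mul, Real.norm_eq_abs, Real.norm_eq_abs, mul_comm]
  exact mul_le_mul_of_nonneg_right (hva y) (abs_nonneg _)

theorem LipschitzWith.integrable_of_support_subset {LJ : ℝ≥0} (hJ : LipschitzWith LJ J)
    {r : ℝ} (hsupp : Function.support J ⊆ closedBall 0 r) : Integrable J μ :=
  hJ.continuous.integrable_of_hasCompactSupport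
    (HasCompactSupport.intro (isCompact_closedBall 0 r) fun _ hx => Function.notMem_support.1
      fun h => hx (hsupp h))

theorem lipschitzWith_integral_mul {LJ : ℝ≥0} (hJ : LipschitzWith LJ J) {r : ℝ}
    (hsupp : Function.support J ⊆ closedBall 0 r) (hv : AEStronglyMeasurable v μ)
    (hva : ∀ y, |v y| ≤ a) :
    LipschitzWith (2 * a * LJ * μ.real (closedBall 0 r)).toNNReal
      (fun x => ∫ y, J (x - y) * v y ∂μ) := by
  have hJi := hJ.integrable_of_support_subset μ hsupp
  have hint : ∀ x, Integrable (fun y => J (x - y) * v y) μ := fun x =>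
    (hJi.comp_sub_left x).mul_bdd hv (ae_of_all _ hva)
  refine LipschitzWith.of_dist_le' fun x x' => ?_
  set S := closedBall x r ∪ closedBall x' r
  have hzero : ∀ z y, y ∉ closedBall z r → J (z - y) = 0 := fun z y hy =>
    Function.notMem_support.1 fun h => hy (by simpa [dist_eq_norm, norm_sub_rev] using hsupp h)
  have hout : ∀ y ∉ S, J (x - y) * v y - J (x' - y) * v y = 0 := fun y hy => by
    rw [hzero x y fun h => hy (.inl h), hzero x' y fun h => hy (.inr h)]
    ring
  have hbound : ∀ y ∈ S, ‖J (x - y) * v y - J (x' - y) * v y‖ ≤ LJ * dist x x' * a :=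
    fun y _ => by
      rw [← sub_mul, norm_mul, Real.norm_eq_abs, Real.norm_eq_abs, ← Real.dist_eq,
        ← dist_sub_right x x' y]
      exact mul_le_mul (hJ.dist_le_mul _ _) (hva y) (abs_nonneg _) (by positivity)
  calc dist (∫ y, J (x - y) * v y ∂μ) (∫ y, J (x' - y) * v y ∂μ)
      = ‖∫ y in S, J (x - y) * v y - J (x' - y) * v y ∂μ‖ := by
        rw [dist_eq_norm, ← integral_sub (hint x) (hint x'),
          setIntegral_eq_integral_of_forall_compl_eq_zero hout]
    _ ≤ LJ * dist x x' * a * μ.real S :=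
        norm_setIntegral_le_of_norm_le_const (measure_union_lt_top measure_closedBall_lt_top
          measure_closedBall_lt_top) hbound
    _ ≤ LJ * dist x x' * a * (2 * μ.real (closedBall 0 r)) := by
        have ha : 0 ≤ a := (abs_nonneg _).trans (hva 0)
        gcongr
        refine (measureReal_union_le _ _).trans_eq ?_
        rw [Measure.addHaar_real_closedBall_center μ x, Measure.addHaar_real_closedBall_center μ x']
        ring
    _ = 2 * a * LJ * μ.real (closedBall 0 r) * dist x x' := by ring

theorem mem_lipschitzBoundedLp_of_ae_eq_integral_mul {LJ : ℝ≥0} (hJ : LipschitzWith LJ J)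
    {r : ℝ} (hsupp : Function.support J ⊆ closedBall 0 r) (hv : AEStronglyMeasurable v μ)
    (hva : ∀ y, |v y| ≤ a) (h : ℝ) {p : ℝ≥0∞} {ν : Measure E} {w : Lp ℝ p ν}
    (hw : w =ᵐ[ν] fun x => (∫ y, J (x - y) * v y ∂μ) + h) :
    w ∈ lipschitzBoundedLp p ν (2 * a * LJ * μ.real (closedBall 0 r)).toNNReal
      (a * ∫ z, |J z| ∂μ + |h|) := by
  have hlip := (lipschitzWith_integral_mul μ hJ hsupp hv hva).add (LipschitzWith.const h)
  rw [add_zero] at hlip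
  refine ⟨_, hlip, fun x => ?_, hw⟩
  exact (abs_add_le _ _).trans
    (add_le_add_left (abs_integral_mul_le μ (hJ.integrable_of_support_subset μ hsupp) hva x) _)

end KernelIntegral

section ConvexIntegral

variable {X : Type*} [NormedAddCommGroup X] [NormedSpace ℝ X] [CompleteSpace X]
  {C : Set X}

theorem Convex.integral_mem_of_measure_univ_le_one {β : Type*} [MeasurableSpace β]
    {ν : Measure β} (hν : ν univ ≤ 1) (hC : Convex ℝ C) (hCc : IsClosed C) (h0 : 0 ∈ C)
    {g : β → X} (hg : ∀ᵐ s ∂ν, g s ∈ C) : ∫ s, g s ∂ν ∈ C := by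
  have : IsFiniteMeasure ν := ⟨hν.trans_lt one_lt_top⟩
  by_cases hgi : Integrable g ν
  swap
  · rwa [integral_undef hgi]
  rcases eq_zero_or_neZero ν with rfl | _
  · rwa [integral_zero_measure]
  rw [← measure_smul_average]
  refine hC.smul_mem_of_zero_mem h0 (hC.average_mem hCc hg hgi) ⟨measureReal_nonneg, ?_⟩
  exact ENNReal.toReal_le_of_le_ofReal zero_le_one (by rwa [ENNReal.ofReal_one])

theorem Convex.intervalIntegral_exp_sub_smul_mem (hC : Convex ℝ C) (hCc : IsClosed C)
    (h0 : 0 ∈ C) {g : ℝ → X} (hg : ∀ s, g s ∈ C) {t : ℝ} (ht : 0 ≤ t) :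
    ∫ s in 0..t, Real.exp (s - t) • g s ∈ C := by
  set w : ℝ → ℝ≥0∞ := fun s => ENNReal.ofReal (Real.exp (s - t))
  have hw : Measurable w := by fun_prop
  have hmass : (volume.restrict (Ioc 0 t)).withDensity w univ ≤ 1 := by
    rw [withDensity_apply _ MeasurableSet.univ, Measure.restrict_univ,
      ← ofReal_integral_eq_lintegral_ofReal, ← intervalIntegral.integral_of_le ht,
      intervalIntegral.integral_comp_sub_right (fun s => Real.exp s), integral_exp]
    · exact ENNReal.ofReal_le_one.2 (by simp [(Real.exp_pos _).le])
    · exact (by fun_prop : Continuous fun s => Real.exp (s - t)).integrableOn_Ioc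
    · exact ae_of_all _ fun s => (Real.exp_pos _).le
  have := hC.integral_mem_of_measure_univ_le_one hmass hCc h0 (ae_of_all _ hg)
  rw [integral_withDensity_eq_integral_toReal_smul hw (ae_of_all _ fun _ => ofReal_lt_top),
    ← intervalIntegral.integral_of_le ht] at this
  simpa [w, (Real.exp_pos _).le] using this

end ConvexIntegral

theorem TotallyBounded.exists_finset_forall_mem_iUnion_ball {X : Type*} [PseudoMetricSpace X]
    {C : Set X} (hC : TotallyBounded C) {δ : ℝ} (hδ : 0 < δ) (r : ℝ) :
    ∃ F : Finset X, ∀ v, (∃ w ∈ C, dist v w ≤ r) → v ∈ ⋃ c ∈ F, ball c (r + δ) := by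
  obtain ⟨t, ht, hCt⟩ := totallyBounded_iff.1 hC δ hδ
  refine ⟨ht.toFinset, fun v ⟨w, hw, hvw⟩ => ?_⟩
  obtain ⟨c, hc, hwc⟩ := mem_iUnion₂.1 (hCt hw)
  exact mem_iUnion₂.2 ⟨c, ht.mem_toFinset.2 hc,
    (dist_triangle v w c).trans_lt (by linarith [mem_ball.1 hwc])⟩

theorem stmt_11_general (N : ℕ) (p : ℝ≥0∞) (hp2 : p ≠ ∞)
    [Fact (1 ≤ p)]
    (h a k₁ : ℝ)
    (f : ℝ → ℝ) (hf : ∀ x y : ℝ, |f x - f y| ≤ k₁ * |x - y|)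
    (hfa : ∀ x : ℝ, |f x| ≤ a)
    (J : EuclideanSpace ℝ (Fin N) → ℝ)
    (hJC1 : ContDiff ℝ 1 J)
    (hJsupp : ∀ x, J x ≠ 0 → ‖x‖ ≤ 1)
    (hJdbdd : ∃ M : ℝ, ∀ x, ‖fderiv ℝ J x‖ ≤ M)
    (ρ : EuclideanSpace ℝ (Fin N) → ℝ)
    (hρint : Integrable ρ)
    (μ : Measure (EuclideanSpace ℝ (Fin N)))
    (hμ : μ = volume.withDensity fun x => ENNReal.ofReal (ρ x))
    (R : ℝ)
    (ε : ℝ) :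
    ∀ η : ℝ, 0 < η → ∃ tη : ℝ, 0 < tη ∧
      ∃ (C : Finset (Lp ℝ p μ)) (rad : Lp ℝ p μ → ℝ),
        (∀ c ∈ C, rad c < η) ∧
        {v : Lp ℝ p μ | ∃ u g : ℝ → Lp ℝ p μ,
            (∀ s : ℝ, ⇑(g s) =ᵐ[μ] fun x =>
              (∫ y, J (x - y) * f ((u s : EuclideanSpace ℝ (Fin N) → ℝ) y)) + h) ∧
            (∀ t : ℝ, 0 ≤ t →
              u t = Real.exp (-t) • u 0 + ∫ s in (0:ℝ)..t, Real.exp (s - t) • g s) ∧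
            ‖u 0‖ ≤ R + ε ∧ v = u tη}
          ⊆ ⋃ c ∈ C, ball c (rad c) := by
  have : IsFiniteMeasure μ := hμ ▸ isFiniteMeasure_withDensity_ofReal hρint.2
  obtain ⟨MJ, hMJ⟩ := hJdbdd
  have hJlip : LipschitzWith MJ.toNNReal J :=
    lipschitzWith_of_nnnorm_fderiv_le (hJC1.differentiable one_ne_zero) fun x => by
      rw [← NNReal.coe_le_coe, coe_nnnorm]
      exact (hMJ x).trans (Real.le_coe_toNNReal MJ)
  have hJball : Function.support J ⊆ closedBall 0 1 := fun x hx =>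
    mem_closedBall_zero_iff.2 (hJsupp x hx)
  have hfc : Continuous f :=
    (LipschitzWith.of_dist_le' fun x y => by simpa only [Real.dist_eq] using hf x y).continuous
  set B := lipschitzBoundedLp p μ (2 * a * MJ.toNNReal * volume.real (closedBall
    (0 : EuclideanSpace ℝ (Fin N)) 1)).toNNReal (a * (∫ z, |J z|) + |h|)
  set C := closure (convexHull ℝ (insert 0 B))
  have hC : TotallyBounded C :=
    (totallyBounded_convexHull.2 ((totallyBounded_lipschitzBoundedLp μ hp2 _ _).insert 0)).closure
  intro η hη
  obtain ⟨t, hexp, ht⟩ : ∃ t, Real.exp (-t) * (R + ε) < η / 2 ∧ 0 < t :=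
    (((Real.tendsto_exp_neg_atTop_nhds_zero.mul_const (R + ε)).eventually
      (gt_mem_nhds (by simpa using half_pos hη))).and (eventually_gt_atTop 0)).exists
  obtain ⟨F, hF⟩ := hC.exists_finset_forall_mem_iUnion_ball (half_pos hη) (Real.exp (-t) * (R + ε))
  refine ⟨t, ht, F, fun _ => Real.exp (-t) * (R + ε) + η / 2, fun _ _ => by linarith, ?_⟩
  rintro _ ⟨u, g, hg, hvoc, hu0, rfl⟩
  have hgB : ∀ s, g s ∈ B := fun s => mem_lipschitzBoundedLp_of_ae_eq_integral_mul volume hJlip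
    hJball (hfc.comp_aestronglyMeasurable (Lp.stronglyMeasurable _).aestronglyMeasurable)
    (fun y => hfa _) h (hg s)
  refine hF _ ⟨_, (convex_convexHull ℝ _).closure.intervalIntegral_exp_sub_smul_mem
    isClosed_closure (subset_closure (subset_convexHull ℝ _ (mem_insert _ _)))
    (fun s => subset_closure (subset_convexHull ℝ _ (mem_insert_of_mem _ (hgB s)))) ht.le, ?_⟩
  rw [hvoc t ht.le, dist_add_self_left, norm_smul, Real.norm_of_nonneg (Real.exp_pos _).le]
  exact mul_le_mul_of_nonneg_left hu0 (Real.exp_pos _).le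

/-- Under (H1)-(H4), with `R = a K^{1/p} ‖J‖_{L¹} + h` and `ε > 0` fixed:
for every `η > 0` there is `t_η > 0` such that the set of values at time `t_η` of all
solutions of the variation of constants formula starting in the ball of radius `R + ε`
admits a finite covering by balls of `L^p(ℝ^N, ρ)` of radius smaller than `η`. -/
theorem stmt_11 (N : ℕ) (hN : 1 ≤ N) (p : ℝ≥0∞) (hp1 : 1 < p) (hp2 : p ≠ ∞)
    [Fact (1 ≤ p)]
    (h a k₁ K S : ℝ) (hh : 0 < h) (ha : 0 < a) (hk₁ : 0 < k₁) (hK : 0 < K) (hS : 0 < S)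
    (f : ℝ → ℝ) (hf : ∀ x y : ℝ, |f x - f y| ≤ k₁ * |x - y|)
    (hfa : ∀ x : ℝ, |f x| ≤ a)
    (J : EuclideanSpace ℝ (Fin N) → ℝ)
    (hJC1 : ContDiff ℝ 1 J) (hJnn : ∀ x, 0 ≤ J x)
    (hJeven : ∀ x, J (-x) = J x)
    (hJsupp : ∀ x, J x ≠ 0 → ‖x‖ ≤ 1)
    (hJdbdd : ∃ M : ℝ, ∀ x, ‖fderiv ℝ J x‖ ≤ M)
    (hH4 : ∀ i : Fin N,
      (∀ x : EuclideanSpace ℝ (Fin N),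
        (∫ y, |fderiv ℝ J (x - y) (EuclideanSpace.single i (1:ℝ))|) ≤ S) ∧
      (∀ y : EuclideanSpace ℝ (Fin N),
        (∫ x, |fderiv ℝ J (x - y) (EuclideanSpace.single i (1:ℝ))|) ≤ S))
    (ρ : EuclideanSpace ℝ (Fin N) → ℝ)
    (hρpos : ∀ x, 0 < ρ x) (hρint : Integrable ρ)
    (hρeven : ∀ x, ρ (-x) = ρ x) (hρ1 : ∫ x, ρ x = 1)
    (hH2 : ∀ y x : EuclideanSpace ℝ (Fin N), dist x y ≤ 1 → ρ x ≤ K * ρ y)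
    (μ : Measure (EuclideanSpace ℝ (Fin N)))
    (hμ : μ = volume.withDensity fun x => ENNReal.ofReal (ρ x))
    (R : ℝ) (hR : R = a * K ^ (1 / p.toReal) * (∫ z, |J z|) + h)
    (ε : ℝ) (hε : 0 < ε) :
    ∀ η : ℝ, 0 < η → ∃ tη : ℝ, 0 < tη ∧
      ∃ (C : Finset (Lp ℝ p μ)) (rad : Lp ℝ p μ → ℝ),
        (∀ c ∈ C, rad c < η) ∧
        {v : Lp ℝ p μ | ∃ u g : ℝ → Lp ℝ p μ,
            (∀ s : ℝ, ⇑(g s) =ᵐ[μ] fun x =>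
              (∫ y, J (x - y) * f ((u s : EuclideanSpace ℝ (Fin N) → ℝ) y)) + h) ∧
            (∀ t : ℝ, 0 ≤ t →
              u t = Real.exp (-t) • u 0 + ∫ s in (0:ℝ)..t, Real.exp (s - t) • g s) ∧
            ‖u 0‖ ≤ R + ε ∧ v = u tη}
          ⊆ ⋃ c ∈ C, ball c (rad c) :=
  stmt_11_general N p hp2 h a k₁ f hf hfa J hJC1 hJsupp hJdbdd ρ hρint μ hμ R ε
end
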